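/- Let C be a ℤ-submodule of (ℤ/2ℤ)^n with dual code C^⊥ = {y ∈ (ℤ/2ℤ)^n : ∑ᵢ yᵢxᵢ = 0 for all x ∈ C}. Then for every real q with 0 ≤ q < 1, ∑_{x ∈ Λ_A(C^⊥)} q^{‖x‖₁} = (1/|C|) · ∑_{c ∈ C} ((1+q)/(1−q))^{n − |c|} ((1−q)/(1+q))^{|c|}, where |c| = #{i : cᵢ ≠ 0} is the Hamming weight of c. -/

import Mathlib

/-!
Write `ψ` for the sign character of `ZMod 2`. Orthogonality of characters on the finite group `C`
expands the indicator of `Λ_A(C^⊥)` as `|C|⁻¹ ∑_{c ∈ C} ψ ⟨x mod 2, c⟩`. Since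
`ψ ⟨x, c⟩ q^‖x‖₁ = ∏ᵢ (ψ(cᵢ) q)^|xᵢ|`, the lattice sum for each `c` factorizes over the
coordinates, and each factor is `∑_{m ∈ ℤ} (±q)^|m| = (1 ± q) / (1 ∓ q)`.
-/

open Finset

lemma AddChar.map_sum_eq_prod {A M ι : Type*} [AddCommMonoid A] [CommMonoid M] (ψ : AddChar A M)
    (s : Finset ι) (f : ι → A) : ψ (∑ i ∈ s, f i) = ∏ i ∈ s, ψ (f i) := by
  induction s using Finset.cons_induction with
  | empty => simp
  | cons i s hi ih => rw [sum_cons, prod_cons, map_add_eq_mul, ih]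

noncomputable def signChar (R : Type*) [CommRing R] : AddChar (ZMod 2) R :=
  AddChar.zmodChar 2 (by norm_num : (-1 : R) ^ 2 = 1)

section SignChar

variable {R : Type*} [CommRing R]

lemma signChar_apply (a : ZMod 2) : signChar R a = if a = 0 then 1 else -1 := by
  rw [signChar, AddChar.zmodChar_apply]
  rcases (by decide : ∀ b : ZMod 2, b = 0 ∨ b = 1) a with rfl | rfl
  · simp
  · simp [show ZMod.val (1 : ZMod 2) = 1 from rfl]

lemma signChar_intCast_mul (m : ℤ) (c : ZMod 2) :
    signChar R (m * c) = signChar R c ^ m.natAbs := by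
  obtain ⟨k, rfl | rfl⟩ := Int.eq_nat_or_neg m <;>
    simp [ZMod.neg_eq_self_mod_two, ← nsmul_eq_mul, AddChar.map_nsmul_eq_pow]

lemma signChar_eq_one_iff [NeZero (2 : R)] {a : ZMod 2} : signChar R a = 1 ↔ a = 0 := by
  rw [signChar_apply]
  split_ifs with ha
  · simp [ha]
  · simp only [ha, iff_false]
    exact fun h => (two_ne_zero : (2 : R) ≠ 0) (by linear_combination -h)

lemma norm_signChar_mul {R : Type*} [NormedCommRing R] [NormOneClass R] (a : ZMod 2) (q : R) :
    ‖signChar R a * q‖ = ‖q‖ := by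
  rw [signChar_apply]
  split_ifs <;> simp

end SignChar

open Classical in
theorem sum_signChar_dotProduct {ι R : Type*} [Fintype ι] [CommRing R] [IsDomain R]
    [NeZero (2 : R)] (C : Submodule ℤ (ι → ZMod 2)) [Fintype C] (y : ι → ZMod 2) :
    ∑ c : C, signChar R (∑ i, y i * c.1 i) =
      if ∀ z ∈ C, ∑ i, y i * z i = 0 then (Fintype.card C : R) else 0 := by
  let φ : C →+ ZMod 2 := AddMonoidHom.mk' (fun c => ∑ i, y i * c.1 i) fun c d => by
    simp only [Submodule.coe_add, Pi.add_apply, mul_add, sum_add_distrib]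
  have h := AddChar.sum_eq_ite ((signChar R).compAddMonoidHom φ)
  simp only [AddChar.compAddMonoidHom_apply, AddChar.eq_zero_iff, signChar_eq_one_iff] at h
  exact h.trans (if_congr ⟨fun hy z hz => hy ⟨z, hz⟩, fun hy c => hy c c.2⟩ rfl rfl)

theorem hasSum_pow_natAbs {K : Type*} [NormedField K] [CompleteSpace K] {r : K} (hr : ‖r‖ < 1) :
    HasSum (fun m : ℤ => r ^ m.natAbs) ((1 + r) / (1 - r)) := by
  have hgeom := hasSum_geometric_of_norm_lt_one hr
  have hneg : HasSum (fun n : ℕ => r ^ (-(n + 1 : ℤ)).natAbs) (r * (1 - r)⁻¹) := by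
    have h : ∀ n : ℕ, (-(n + 1 : ℤ)).natAbs = n + 1 := fun n => by omega
    simpa only [h, pow_succ'] using hgeom.mul_left r
  have hpos : HasSum (fun n : ℕ => r ^ (n : ℤ).natAbs) (1 - r)⁻¹ := by
    simpa only [Int.natAbs_natCast] using hgeom
  have := HasSum.of_nat_of_neg_add_one (f := fun m : ℤ => r ^ m.natAbs) hpos hneg
  rwa [← one_add_mul, ← div_eq_mul_inv] at this

theorem summable_norm_pow_natAbs {K : Type*} [NormedField K] {r : K} (hr : ‖r‖ < 1) :
    Summable fun m : ℤ => ‖r ^ m.natAbs‖ := by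
  simpa only [norm_pow] using (hasSum_pow_natAbs (r := ‖r‖) (by rwa [norm_norm])).summable

lemma tsum_pow_natAbs_signChar_mul {q : ℝ} (hq : |q| < 1) (a : ZMod 2) :
    ∑' m : ℤ, (signChar ℝ a * q) ^ m.natAbs =
      if a = 0 then (1 + q) / (1 - q) else (1 - q) / (1 + q) := by
  rw [(hasSum_pow_natAbs (by rwa [norm_signChar_mul, Real.norm_eq_abs])).tsum_eq, signChar_apply]
  split_ifs
  · simp
  · simp [sub_eq_add_neg]

section PiProduct

variable {α R : Type*} [NormedField R]

theorem summable_norm_prod_fin_pi {n : ℕ} {f : Fin n → α → R}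
    (hf : ∀ i, Summable fun a => ‖f i a‖) : Summable fun x : Fin n → α => ‖∏ i, f i (x i)‖ := by
  simp only [norm_prod]
  induction n with
  | zero => exact .of_finite
  | succ n ih =>
    rw [← (Fin.consEquiv fun _ => α).summable_iff]
    simp only [Function.comp_def, Fin.consEquiv_apply, Fin.prod_univ_succ, Fin.cons_zero,
      Fin.cons_succ]
    have h0 : (0 : α → ℝ) ≤ fun a => ‖f 0 a‖ := fun _ => norm_nonneg _
    have hsucc : (0 : (Fin n → α) → ℝ) ≤ fun x => ∏ i, ‖f i.succ (x i)‖ :=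
      fun _ => prod_nonneg fun _ _ => norm_nonneg _
    exact ((hf 0).mul_of_nonneg (ih fun i => hf i.succ) h0 hsucc :)

theorem tsum_prod_fin_pi [CompleteSpace R] {n : ℕ} {f : Fin n → α → R}
    (hf : ∀ i, Summable fun a => ‖f i a‖) :
    ∑' x : Fin n → α, ∏ i, f i (x i) = ∏ i, ∑' a, f i a := by
  induction n with
  | zero => simp
  | succ n ih =>
    rw [← (Fin.consEquiv fun _ => α).tsum_eq]
    simp only [Fin.consEquiv_apply, Fin.prod_univ_succ, Fin.cons_zero, Fin.cons_succ]
    rw [← ih fun i => hf i.succ,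
      tsum_mul_tsum_of_summable_norm (hf 0) (summable_norm_prod_fin_pi fun i => hf i.succ)]

end PiProduct

theorem prod_ite_eq_zero_eq_pow_mul_pow_hammingNorm {ι β M : Type*} [Fintype ι] [Zero β]
    [DecidableEq β] [CommMonoid M] (x : ι → β) (a b : M) :
    ∏ i, (if x i = 0 then a else b) =
      a ^ (Fintype.card ι - hammingNorm x) * b ^ hammingNorm x := by
  have hcard : #{i | x i = 0} + hammingNorm x = Fintype.card ι :=
    card_filter_add_card_filter_not _
  rw [prod_ite, prod_const, prod_const, ← hcard, Nat.add_sub_cancel]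
  rfl

/-- Theorem: ℓ¹-theta function of the Construction A lattice of the dual of a
binary code, via the Hamming weight enumerator. -/
theorem theta_one_constructionA_binary_dual
    (n : ℕ) (C : Submodule ℤ (Fin n → ZMod 2))
    (q : ℝ) (hq0 : 0 ≤ q) (hq1 : q < 1) :
    (∑' x : {x : Fin n → ℤ //
        ∀ z ∈ C, ∑ i, ((x i : ℤ) : ZMod 2) * z i = 0},
        q ^ (∑ i, (x.val i).natAbs))
      = (1 / (Nat.card C : ℝ)) *
        ∑' c : C,
          ((1 + q) / (1 - q)) ^ (n - (Finset.univ.filter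
              fun i => ((c : Fin n → ZMod 2)) i ≠ 0).card) *
          ((1 - q) / (1 + q)) ^ (Finset.univ.filter
              fun i => ((c : Fin n → ZMod 2)) i ≠ 0).card := by
  classical
  have : Fintype C := Fintype.ofFinite C
  have hq : |q| < 1 := by rwa [abs_of_nonneg hq0]
  let f (c : C) (i : Fin n) (m : ℤ) : ℝ := (signChar ℝ (c.1 i) * q) ^ m.natAbs
  have hf (c : C) (i : Fin n) : Summable fun m => ‖f c i m‖ :=
    summable_norm_pow_natAbs (by rwa [norm_signChar_mul, Real.norm_eq_abs])
  have hexpand (x : Fin n → ℤ) :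
      Set.indicator {x | ∀ z ∈ C, ∑ i, (x i : ZMod 2) * z i = 0}
        (fun x => q ^ ∑ i, (x i).natAbs) x =
        (Fintype.card C : ℝ)⁻¹ * ∑ c : C, ∏ i, f c i (x i) := by
    simp only [f, mul_pow, prod_mul_distrib, ← signChar_intCast_mul, ← AddChar.map_sum_eq_prod,
      ← sum_mul, sum_signChar_dotProduct, prod_pow_eq_pow_sum, Set.indicator_apply,
      Set.mem_ofPred_eq]
    split_ifs
    · field_simp
    · simp
  calc _ = ∑' x : Fin n → ℤ, (Fintype.card C : ℝ)⁻¹ * ∑ c : C, ∏ i, f c i (x i) :=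
        (_root_.tsum_subtype {x : Fin n → ℤ | ∀ z ∈ C, ∑ i, (x i : ZMod 2) * z i = 0} _).trans
          (tsum_congr hexpand)
    _ = (Fintype.card C : ℝ)⁻¹ * ∑ c : C, ∏ i, ∑' m, f c i m := by
        rw [tsum_mul_left, Summable.tsum_finsetSum fun c _ =>
          (summable_norm_prod_fin_pi (hf c)).of_norm]
        simp only [tsum_prod_fin_pi (hf _)]
    _ = _ := by
        simp only [f, tsum_pow_natAbs_signChar_mul hq, prod_ite_eq_zero_eq_pow_mul_pow_hammingNorm,
          Fintype.card_fin, tsum_fintype, Nat.card_eq_fintype_card, one_div]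
        rfl
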